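/- arXiv:2209.06268 — 5 statements merged into one kernel-verified Lean document; each statement's English description precedes it below -/
import Mathlib

section
/- Let n ≥ 2 and let k, l be integers with 0 ≤ l < k ≤ n. Let λ ∈ ℝⁿ lie in the Gårding cone Γ_k and suppose S_k(λ)/C_n^k = S_l(λ)/C_n^l. Then (l+1) S_{l+1}(λ) S_k(λ) − (k+1) S_{k+1}(λ) S_l(λ) − (k−l) S_k(λ) S_l(λ) ≥ 0, where S_{n+1}(λ) := 0 when k = n. -/
open scoped BigOperators

noncomputable section

/-- The k-th elementary symmetric polynomial of `λ ∈ ℝⁿ`; by definition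
`Svec n m λ = 0` for `m > n` and `Svec n 0 λ = 1`. -/
def Svec (n k : ℕ) (lam : Fin n → ℝ) : ℝ :=
  ∑ s ∈ Finset.powersetCard k (Finset.univ : Finset (Fin n)), ∏ i ∈ s, lam i

/-- Integer-indexed version, with the convention `S_m = 0` for `m < 0`. -/
def SvecZ (n : ℕ) (k : ℤ) (lam : Fin n → ℝ) : ℝ :=
  if 0 ≤ k then Svec n k.toNat lam else 0

/-- The Gårding cone `Γ_k = {λ : S_1(λ) > 0, …, S_k(λ) > 0}`. -/
def GardingCone (n k : ℕ) : Set (Fin n → ℝ) :=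
  {lam | ∀ i : ℕ, 1 ≤ i → i ≤ k → 0 < Svec n i lam}

/-!
Write `E_j = S_j / C_n^j`. Newton's inequalities `E_j E_{j+2} ≤ E_{j+1}²` hold for every real
vector: differentiating `∏ (X - λ_i)` keeps all roots real (Rolle) and, by Vieta, leaves the
means `E_j` unchanged, which reduces to the case `j + 2 = n`; there, inverting the roots turns
the inequality into `E_0 E_2 ≤ E_1²`, which is Cauchy–Schwarz.

On `Γ_k` the means `E_0, …, E_k` are positive, so the ratios `E_{j+1} / E_j` are nonincreasing
for `j ≤ k`. As `E_k = E_l`, these ratios cannot all lie on one side of `1` between `l` and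
`k`, whence `E_{l+1} ≥ E_l = E_k ≥ E_{k+1}`. Since `(j+1) S_{j+1} = (n-j) C_n^j E_{j+1}`, the
quantity in question is `C_n^l C_n^k E_k ((n-l)(E_{l+1} - E_k) + (n-k)(E_k - E_{k+1}))`.
-/

theorem Finset.esymm_map_val_card_sub {ι K : Type*} [Field K] [DecidableEq ι] (u : Finset ι)
    (x : ι → K) (hx : ∀ i ∈ u, x i ≠ 0) {j : ℕ} (hj : j ≤ u.card) :
    (u.val.map x).esymm (u.card - j)
      = (u.val.map fun i => (x i)⁻¹).esymm j * ∏ i ∈ u, x i := by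
  rw [Finset.esymm_map_val, Finset.esymm_map_val, Finset.sum_mul]
  refine Finset.sum_nbij' (u \ ·) (u \ ·) ?_ ?_ ?_ ?_ ?_
  · intro t ht
    rw [Finset.mem_powersetCard] at ht ⊢
    exact ⟨Finset.sdiff_subset, by rw [Finset.card_sdiff_of_subset ht.1, ht.2]; omega⟩
  · intro t ht
    rw [Finset.mem_powersetCard] at ht ⊢
    exact ⟨Finset.sdiff_subset, by rw [Finset.card_sdiff_of_subset ht.1, ht.2]⟩
  · intro t ht
    exact Finset.sdiff_sdiff_eq_self (Finset.mem_powersetCard.mp ht).1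
  · intro t ht
    exact Finset.sdiff_sdiff_eq_self (Finset.mem_powersetCard.mp ht).1
  · intro t ht
    have htu := (Finset.mem_powersetCard.mp ht).1
    rw [Finset.prod_inv_distrib, ← Finset.prod_sdiff htu, inv_mul_cancel_left₀]
    exact Finset.prod_ne_zero_iff.mpr fun i hi => hx i (Finset.sdiff_subset hi)

namespace Multiset

section CommSemiring

variable {R : Type*} [CommSemiring R]

theorem esymm_cons_succ (a : R) (s : Multiset R) (n : ℕ) :
    (a ::ₘ s).esymm (n + 1) = s.esymm (n + 1) + a * s.esymm n := by
  simp [esymm, map_map, sum_map_mul_left]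

theorem esymm_one (s : Multiset R) : s.esymm 1 = s.sum := by
  simp [esymm, powersetCard_one, map_map]

theorem esymm_card (s : Multiset R) : s.esymm (card s) = s.prod := by
  simp [esymm, powersetCard_self]

theorem esymm_eq_zero_of_card_lt {s : Multiset R} {n : ℕ} (h : card s < n) : s.esymm n = 0 := by
  simp [esymm, powersetCard_eq_empty n h]

end CommSemiring

theorem two_mul_esymm_two {R : Type*} [CommRing R] (s : Multiset R) :
    2 * s.esymm 2 = s.sum ^ 2 - (s.map (· ^ 2)).sum := by
  induction s using Multiset.induction_on with
  | empty => simp [esymm_eq_zero_of_card_lt (show card (0 : Multiset R) < 2 by simp)]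
  | cons a s ih =>
    rw [esymm_cons_succ, esymm_one, sum_cons, map_cons, sum_cons]
    linear_combination ih

theorem sum_map_eq_sum_toEnumFinset {α β : Type*} [DecidableEq α] [AddCommMonoid β]
    (s : Multiset α) (g : α → β) :
    (s.map g).sum = ∑ x ∈ s.toEnumFinset, g x.1 := by
  conv_lhs => rw [← map_toEnumFinset_fst s]
  rw [map_map, Finset.sum_map_val]
  rfl

theorem sq_sum_le_card_mul_sum_sq {α : Type*} [CommRing α] [LinearOrder α]
    [IsStrictOrderedRing α] (s : Multiset α) :
    s.sum ^ 2 ≤ card s * (s.map (· ^ 2)).sum := by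
  have h := _root_.sq_sum_le_card_mul_sum_sq (s := s.toEnumFinset) (f := Prod.fst)
  rwa [card_toEnumFinset, ← sum_map_eq_sum_toEnumFinset s (fun y => y),
    ← sum_map_eq_sum_toEnumFinset s (· ^ 2), map_id'] at h

theorem esymm_card_sub {K : Type*} [Field K] (s : Multiset K) (hs : (0 : K) ∉ s)
    {j : ℕ} (hj : j ≤ card s) :
    s.esymm (card s - j) = (s.map (·⁻¹)).esymm j * s.prod := by
  classical
  rw [← map_toEnumFinset_fst s] at hs hj ⊢
  rw [card_map, Finset.card_val] at hj
  rw [map_map, card_map, Finset.card_val, Finset.prod_map_val]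
  exact Finset.esymm_map_val_card_sub _ _ (fun x hx h0 => hs (h0 ▸ mem_map_of_mem Prod.fst hx)) hj

def esymmMean (s : Multiset ℝ) (j : ℕ) : ℝ :=
  s.esymm j / (card s).choose j

theorem esymmMean_zero (s : Multiset ℝ) : s.esymmMean 0 = 1 := by
  simp [esymmMean, esymm]

theorem esymmMean_two_le_sq (s : Multiset ℝ) : s.esymmMean 2 ≤ s.esymmMean 1 ^ 2 := by
  rcases lt_or_ge (card s) 2 with hs | hs
  · simp [esymmMean, Nat.choose_eq_zero_of_lt hs, sq_nonneg]
  have hN : (2 : ℝ) ≤ card s := by exact_mod_cast hs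
  rw [esymmMean, esymmMean, Nat.cast_choose_two, Nat.choose_one_right, esymm_one, div_pow,
    div_le_div_iff₀ (by nlinarith) (by positivity)]
  nlinarith [two_mul_esymm_two s, sq_sum_le_card_mul_sum_sq s]

theorem esymmMean_card_sub (s : Multiset ℝ) (hs : (0 : ℝ) ∉ s) {j : ℕ} (hj : j ≤ card s) :
    s.esymmMean (card s - j) = (s.map (·⁻¹)).esymmMean j * s.prod := by
  rw [esymmMean, esymmMean, esymm_card_sub s hs hj, card_map, Nat.choose_symm hj]
  ring

theorem esymmMean_mul_esymmMean_le_sq_of_card_eq (s : Multiset ℝ) {m : ℕ} (h : card s = m + 2) :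
    s.esymmMean m * s.esymmMean (m + 2) ≤ s.esymmMean (m + 1) ^ 2 := by
  by_cases hs : (0 : ℝ) ∈ s
  · have htop : s.esymmMean (m + 2) = 0 := by
      rw [esymmMean, ← h, esymm_card, prod_eq_zero hs, zero_div]
    rw [htop, mul_zero]
    exact sq_nonneg _
  set t := s.map (·⁻¹)
  have hmean (j : ℕ) (hj : j ≤ 2) : s.esymmMean (m + 2 - j) = t.esymmMean j * s.prod := by
    rw [← h]; exact esymmMean_card_sub s hs (by omega)
  have h0 : s.esymmMean (m + 2) = t.esymmMean 0 * s.prod := hmean 0 (by norm_num)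
  have h1 : s.esymmMean (m + 1) = t.esymmMean 1 * s.prod := hmean 1 (by norm_num)
  have h2 : s.esymmMean m = t.esymmMean 2 * s.prod := hmean 2 le_rfl
  calc s.esymmMean m * s.esymmMean (m + 2) = t.esymmMean 2 * s.prod ^ 2 := by
        rw [h0, h2, esymmMean_zero]; ring
    _ ≤ t.esymmMean 1 ^ 2 * s.prod ^ 2 := by gcongr; exact t.esymmMean_two_le_sq
    _ = s.esymmMean (m + 1) ^ 2 := by rw [h1]; ring

open Polynomial

theorem card_roots_derivative_prod_X_sub_C (s : Multiset ℝ) :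
    card (derivative (s.map fun a => X - C a).prod).roots = card s - 1 := by
  apply le_antisymm
  · calc _ ≤ (derivative (s.map fun a => X - C a).prod).natDegree := card_roots' _
      _ = card s - 1 := by rw [natDegree_derivative, natDegree_multiset_prod_X_sub_C_eq_card]
  · have := card_roots_le_derivative (s.map fun a => X - C a).prod
    rw [roots_multiset_prod_X_sub_C] at this
    omega

theorem card_mul_esymm_roots_derivative_prod_X_sub_C (s : Multiset ℝ) {j : ℕ}
    (hj : j < card s) :
    (card s : ℝ) * (derivative (s.map fun a => X - C a).prod).roots.esymm j
      = (card s - j) * s.esymm j := by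
  set f := (s.map fun a => X - C a).prod
  have hf : f.natDegree = card s := natDegree_multiset_prod_X_sub_C_eq_card s
  have hmonic : f.Monic := monic_multiset_prod_of_monic _ _ fun a _ => monic_X_sub_C a
  have hdeg : (derivative f).natDegree = card s - 1 := by rw [natDegree_derivative, hf]
  have hvieta := coeff_eq_esymm_roots_of_card (p := derivative f)
    (by rw [card_roots_derivative_prod_X_sub_C, hdeg]) (k := card s - 1 - j) (by omega)
  rw [coeff_derivative, prod_X_sub_C_coeff s (by omega), leadingCoeff_derivative, hf,
    hmonic.leadingCoeff, hdeg, show card s - 1 - (card s - 1 - j) = j by omega,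
    show card s - (card s - 1 - j + 1) = j by omega, Nat.cast_sub (by omega),
    Nat.cast_sub (by omega)] at hvieta
  have hsign : (-1 : ℝ) ^ j ≠ 0 := pow_ne_zero _ (by norm_num)
  apply mul_left_cancel₀ hsign
  linear_combination -hvieta

theorem esymmMean_roots_derivative_prod_X_sub_C (s : Multiset ℝ) {j : ℕ} (hj : j < card s) :
    (derivative (s.map fun a => X - C a).prod).roots.esymmMean j = s.esymmMean j := by
  have hchoose : ((card s - 1).choose j : ℝ) * card s = (card s).choose j * (card s - j) := by
    have h := Nat.choose_mul_succ_eq (card s - 1) j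
    rw [Nat.sub_add_cancel (by omega)] at h
    have h' := congrArg (Nat.cast : ℕ → ℝ) h
    push_cast [Nat.cast_sub hj.le] at h'
    exact h'
  have hN : (card s : ℝ) ≠ 0 := by norm_cast; omega
  rw [esymmMean, esymmMean, card_roots_derivative_prod_X_sub_C,
    div_eq_div_iff (by norm_cast; exact (Nat.choose_pos (by omega)).ne')
      (by norm_cast; exact (Nat.choose_pos hj.le).ne')]
  apply mul_left_cancel₀ hN
  linear_combination ((card s).choose j : ℝ) * card_mul_esymm_roots_derivative_prod_X_sub_C s hj
    - s.esymm j * hchoose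

theorem esymmMean_mul_esymmMean_le_sq (s : Multiset ℝ) (m : ℕ) :
    s.esymmMean m * s.esymmMean (m + 2) ≤ s.esymmMean (m + 1) ^ 2 := by
  rcases lt_or_ge (card s) (m + 2) with hs | hs
  · simp [esymmMean, Nat.choose_eq_zero_of_lt hs, sq_nonneg]
  obtain ⟨d, hd⟩ := Nat.exists_eq_add_of_le hs
  clear hs
  induction d generalizing s with
  | zero => exact esymmMean_mul_esymmMean_le_sq_of_card_eq s hd
  | succ d ih =>
    have ht := card_roots_derivative_prod_X_sub_C s
    have := ih (derivative (s.map fun a => X - C a).prod).roots (by omega)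
    rwa [esymmMean_roots_derivative_prod_X_sub_C s (by omega),
      esymmMean_roots_derivative_prod_X_sub_C s (by omega),
      esymmMean_roots_derivative_prod_X_sub_C s (by omega)] at this

theorem esymm_eq_esymmMean_mul_choose (s : Multiset ℝ) (j : ℕ) :
    s.esymm j = s.esymmMean j * (card s).choose j := by
  rcases lt_or_ge (card s) j with h | h
  · rw [esymm_eq_zero_of_card_lt h, Nat.choose_eq_zero_of_lt h, Nat.cast_zero, mul_zero]
  · rw [esymmMean, div_mul_cancel₀]
    exact_mod_cast (Nat.choose_pos h).ne'

theorem succ_mul_esymm_succ (s : Multiset ℝ) (j : ℕ) :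
    ((j : ℝ) + 1) * s.esymm (j + 1) = (card s - j) * (card s).choose j * s.esymmMean (j + 1) := by
  have hchoose : ((j : ℝ) + 1) * (card s).choose (j + 1) = (card s - j) * (card s).choose j := by
    rcases le_or_gt j (card s) with h | h
    · have h' := congrArg (Nat.cast : ℕ → ℝ) (Nat.choose_succ_right_eq (card s) j)
      push_cast [Nat.cast_sub h] at h'
      linarith
    · simp [Nat.choose_eq_zero_of_lt h, Nat.choose_eq_zero_of_lt (h.trans (Nat.lt_succ_self j))]
  rw [esymm_eq_esymmMean_mul_choose, ← hchoose]
  ring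

end Multiset

section LogConcave

variable {p : ℕ → ℝ} {k : ℕ}

theorem succ_lt_of_succ_lt_of_newton (hpos : ∀ j ≤ k, 0 < p j)
    (hnewton : ∀ j, p j * p (j + 2) ≤ p (j + 1) ^ 2) {a b : ℕ} (hab : a ≤ b) (hbk : b ≤ k)
    (h : p (a + 1) < p a) : p (b + 1) < p b := by
  induction b, hab using Nat.le_induction with
  | base => exact h
  | succ b hab ih =>
    have hb := hpos b (by omega)
    have hb1 := hpos (b + 1) hbk
    nlinarith [hnewton b, ih (by omega)]

theorem succ_le_of_succ_le_of_newton (hpos : ∀ j ≤ k, 0 < p j)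
    (hnewton : ∀ j, p j * p (j + 2) ≤ p (j + 1) ^ 2) {a b : ℕ} (hab : a ≤ b) (hbk : b ≤ k)
    (h : p (a + 1) ≤ p a) : p (b + 1) ≤ p b := by
  induction b, hab using Nat.le_induction with
  | base => exact h
  | succ b hab ih =>
    have hb := hpos b (by omega)
    have hb1 := hpos (b + 1) hbk
    nlinarith [hnewton b, ih (by omega)]

theorem le_succ_of_eq_of_newton (hpos : ∀ j ≤ k, 0 < p j)
    (hnewton : ∀ j, p j * p (j + 2) ≤ p (j + 1) ^ 2) {l : ℕ} (hlk : l < k) (heq : p k = p l) :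
    p l ≤ p (l + 1) := by
  by_contra! h
  have hanti : StrictAntiOn p (Set.Icc l k) :=
    strictAntiOn_of_add_one_lt Set.ordConnected_Icc fun b _ hb hb1 =>
      succ_lt_of_succ_lt_of_newton hpos hnewton hb.1 hb.2 h
  exact (hanti ⟨le_rfl, hlk.le⟩ ⟨hlk.le, le_rfl⟩ hlk).ne heq

theorem succ_le_of_eq_of_newton (hpos : ∀ j ≤ k, 0 < p j)
    (hnewton : ∀ j, p j * p (j + 2) ≤ p (j + 1) ^ 2) {l : ℕ} (hlk : l < k) (heq : p k = p l) :
    p (k + 1) ≤ p k := by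
  obtain ⟨j, hlj, hjk, hj⟩ : ∃ j, l ≤ j ∧ j < k ∧ p (j + 1) ≤ p j := by
    by_contra! h
    have hmono : StrictMonoOn p (Set.Icc l k) :=
      strictMonoOn_of_lt_add_one Set.ordConnected_Icc fun b _ hb hb1 => h b hb.1 hb1.2
    exact (hmono ⟨le_rfl, hlk.le⟩ ⟨hlk.le, le_rfl⟩ hlk).ne heq.symm
  exact succ_le_of_succ_le_of_newton hpos hnewton hjk.le le_rfl hj

end LogConcave

theorem Svec_eq_esymm (n j : ℕ) (lam : Fin n → ℝ) :
    Svec n j lam = (Finset.univ.val.map lam).esymm j :=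
  (Finset.esymm_map_val lam _ j).symm

theorem card_map_univ_val (n : ℕ) (lam : Fin n → ℝ) :
    Multiset.card (Finset.univ.val.map lam) = n := by
  simp

theorem esymmMean_map_univ_val (n j : ℕ) (lam : Fin n → ℝ) :
    (Finset.univ.val.map lam).esymmMean j = Svec n j lam / n.choose j := by
  rw [Multiset.esymmMean, card_map_univ_val, Svec_eq_esymm]

theorem esymmMean_pos_of_mem_gardingCone {n k j : ℕ} {lam : Fin n → ℝ} (hkn : k ≤ n)
    (hlam : lam ∈ GardingCone n k) (hj : j ≤ k) :
    0 < (Finset.univ.val.map lam).esymmMean j := by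
  rcases Nat.eq_zero_or_pos j with rfl | hj0
  · simp [Multiset.esymmMean_zero]
  · rw [esymmMean_map_univ_val]
    exact div_pos (hlam j hj0 hj) (by exact_mod_cast Nat.choose_pos (hj.trans hkn))

theorem newton_maclaurin_consequence_general
    (n k l : ℕ) (hlk : l < k) (hkn : k ≤ n)
    (lam : Fin n → ℝ) (hlam : lam ∈ GardingCone n k)
    (heq : Svec n k lam / (n.choose k : ℝ) = Svec n l lam / (n.choose l : ℝ)) :
    0 ≤ ((l : ℝ) + 1) * Svec n (l + 1) lam * Svec n k lam
      - ((k : ℝ) + 1) * Svec n (k + 1) lam * Svec n l lam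
      - ((k : ℝ) - l) * Svec n k lam * Svec n l lam := by
  set s : Multiset ℝ := Finset.univ.val.map lam
  have hpos (j : ℕ) (hj : j ≤ k) : 0 < s.esymmMean j :=
    esymmMean_pos_of_mem_gardingCone hkn hlam hj
  have heq' : s.esymmMean k = s.esymmMean l := by
    rw [esymmMean_map_univ_val, esymmMean_map_univ_val, heq]
  have hl := le_succ_of_eq_of_newton hpos s.esymmMean_mul_esymmMean_le_sq hlk heq'
  have hk := succ_le_of_eq_of_newton hpos s.esymmMean_mul_esymmMean_le_sq hlk heq'
  rw [heq'] at hk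
  simp only [Svec_eq_esymm]
  rw [s.succ_mul_esymm_succ, s.succ_mul_esymm_succ, s.esymm_eq_esymmMean_mul_choose k,
    s.esymm_eq_esymmMean_mul_choose l, card_map_univ_val, heq']
  have hnk : (k : ℝ) ≤ n := by exact_mod_cast hkn
  have hlk' : (l : ℝ) ≤ k := by exact_mod_cast hlk.le
  have key : 0 ≤ (n.choose l : ℝ) * n.choose k * s.esymmMean l
      * ((n - l) * (s.esymmMean (l + 1) - s.esymmMean l)
        + (n - k) * (s.esymmMean l - s.esymmMean (k + 1))) :=
    mul_nonneg (mul_nonneg (by positivity) (hpos l hlk.le).le)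
      (add_nonneg (mul_nonneg (by linarith) (sub_nonneg.2 hl))
        (mul_nonneg (by linarith) (sub_nonneg.2 hk)))
  linear_combination key

/-- If `λ ∈ Γ_k` and `S_k(λ)/C_n^k = S_l(λ)/C_n^l`, then
`(l+1) S_{l+1} S_k − (k+1) S_{k+1} S_l − (k−l) S_k S_l ≥ 0`. -/
theorem newton_maclaurin_consequence
    (n k l : ℕ) (hn : 2 ≤ n) (hlk : l < k) (hkn : k ≤ n)
    (lam : Fin n → ℝ) (hlam : lam ∈ GardingCone n k)
    (heq : Svec n k lam / (n.choose k : ℝ) = Svec n l lam / (n.choose l : ℝ)) :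
    0 ≤ ((l : ℝ) + 1) * Svec n (l + 1) lam * Svec n k lam
      - ((k : ℝ) + 1) * Svec n (k + 1) lam * Svec n l lam
      - ((k : ℝ) - l) * Svec n k lam * Svec n l lam :=
  newton_maclaurin_consequence_general n k l hlk hkn lam hlam heq
end
end

section
/- Let n ≥ 2 and let k, l, r, s be integers with k > l ≥ 0, r > s ≥ 0, k ≥ r, l ≥ s, and k ≤ n. Then for every λ ∈ ℝⁿ in the Gårding cone Γ_k, the generalized Maclaurin inequality holds: ((S_k(λ)/C_n^k) / (S_l(λ)/C_n^l))^{1/(k−l)} ≤ ((S_r(λ)/C_n^r) / (S_s(λ)/C_n^s))^{1/(r−s)}. -/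
open scoped BigOperators

noncomputable section

/-!
Write `E_j = S_j / C_n^j` (`svecMean`). Newton's inequalities `E_j E_{j+2} ≤ E_{j+1}²` hold on
all of `ℝⁿ`, by induction on `n`: by Rolle the derivative of `∏ (X + λ_i)` is again of the form
`n ∏ (X + μ_i)` with `μ ∈ ℝⁿ⁻¹`, and comparing coefficients shows that `μ` has the same means
`E_j` as `λ` for `j < n`. This reduces to `n = j + 2`. There, unless `E_n = ∏ λ_i` vanishes,
replacing `λ` by `λ⁻¹` reverses the indices and leaves the case `j = 0`, which is Cauchy–Schwarz.

On `Γ_k` the means `E_0, …, E_k` are positive, so Newton says that `i ↦ log E_i` is concave on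
`[0, k]`. The inequality to prove compares the slopes of its chords over `[l, k]` and `[s, r]`,
and the first chord lies to the right of the second.
-/

open Finset Polynomial

def svecMean (n k : ℕ) (f : Fin n → ℝ) : ℝ := Svec n k f / (n.choose k : ℝ)

section Svec

variable {n : ℕ}

lemma svec_zero (f : Fin n → ℝ) : Svec n 0 f = 1 := by
  simp [Svec]

lemma svec_one (f : Fin n → ℝ) : Svec n 1 f = ∑ i, f i := by
  simp [Svec, powersetCard_one]

lemma two_mul_svec_two (f : Fin n → ℝ) : 2 * Svec n 2 f = (∑ i, f i) ^ 2 - ∑ i, f i ^ 2 := by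
  have h := congrArg (MvPolynomial.aeval f) (MvPolynomial.mul_esymm_eq_sum (Fin n) ℝ 2)
  have antidiagonal_one : antidiagonal 1 = {(0, 1), (1, 0)} := rfl
  simp [MvPolynomial.psum, MvPolynomial.esymm, antidiagonal_one, powersetCard_one] at h
  rw [Svec, h]
  ring

lemma svec_self (f : Fin n → ℝ) : Svec n n f = ∏ i, f i := by
  have h := powersetCard_self (univ : Finset (Fin n))
  rw [card_fin] at h
  rw [Svec, h, sum_singleton]

lemma svec_eq_zero_of_lt {k : ℕ} (h : n < k) (f : Fin n → ℝ) : Svec n k f = 0 := by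
  simp [Svec, powersetCard_eq_empty.mpr (by rwa [card_fin])]

lemma svec_eq_esymm (k : ℕ) (f : Fin n → ℝ) :
    Svec n k f = ((univ.val : Multiset (Fin n)).map f).esymm k := by
  rw [esymm_map_val]
  rfl

lemma svec_sub_eq_sum_compl {k : ℕ} (hk : k ≤ n) (f : Fin n → ℝ) :
    Svec n (n - k) f = ∑ s ∈ powersetCard k univ, ∏ i ∈ sᶜ, f i := by
  refine sum_nbij' compl compl ?_ ?_ ?_ ?_ ?_ <;> simp_all [card_compl]
  omega

lemma svec_inv_mul_prod {k : ℕ} (hk : k ≤ n) {f : Fin n → ℝ} (hf : ∀ i, f i ≠ 0) :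
    Svec n k f⁻¹ * ∏ i, f i = Svec n (n - k) f := by
  rw [svec_sub_eq_sum_compl hk, Svec, sum_mul]
  refine sum_congr rfl fun s _ => ?_
  rw [← prod_mul_prod_compl s f, Pi.inv_def, prod_inv_distrib, inv_mul_cancel_left₀]
  exact prod_ne_zero_iff.mpr fun i _ => hf i

lemma coeff_prod_X_add_C_eq_svec {k : ℕ} (hk : k ≤ n) (f : Fin n → ℝ) :
    (∏ i, (X + C (f i))).coeff (n - k) = Svec n k f := by
  rw [prod_X_add_C_coeff _ _ (by simp)]
  simp [Svec, Nat.sub_sub_self hk]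

end Svec

lemma Polynomial.Splits.derivative {p : ℝ[X]} (hp : p.Splits) : p.derivative.Splits := by
  rw [splits_iff_card_roots] at hp ⊢
  have := p.card_roots_le_derivative
  have := natDegree_derivative_le p
  have := card_roots' p.derivative
  omega

lemma Multiset.exists_univ_val_map_eq {α : Type*} {n : ℕ} (t : Multiset α)
    (ht : Multiset.card t = n) : ∃ g : Fin n → α, (univ.val : Multiset (Fin n)).map g = t := by
  obtain ⟨l, rfl⟩ := Quot.exists_rep t
  obtain rfl : l.length = n := ht
  exact ⟨l.get, by simp⟩

/-- The `g i` are the negatives of the roots of the derivative of `∏ (X + f i)`. -/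
lemma exists_succ_mul_svec_eq (n : ℕ) (f : Fin (n + 1) → ℝ) :
    ∃ g : Fin n → ℝ, ∀ j ≤ n,
      ((n : ℝ) + 1) * Svec n j g = (n + 1 - j : ℕ) * Svec (n + 1) j f := by
  set P := ∏ i, (X + C (f i))
  have hPdeg : P.natDegree = n + 1 := by
    simp [P, natDegree_prod_of_monic, monic_X_add_C]
  have hsplit : (derivative P).Splits := (Splits.prod fun i _ => Splits.X_add_C (f i)).derivative
  have hcoeff : ∀ j ≤ n,
      (derivative P).coeff (n - j) = (n + 1 - j : ℕ) * Svec (n + 1) j f := by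
    intro j hj
    rw [coeff_derivative, show n - j + 1 = n + 1 - j by omega,
      coeff_prod_X_add_C_eq_svec (by omega)]
    push_cast [Nat.cast_sub hj, Nat.cast_sub (by omega : j ≤ n + 1)]
    ring
  have hroots : Multiset.card (derivative P).roots = n := by
    rw [splits_iff_card_roots.mp hsplit, natDegree_derivative, hPdeg, Nat.add_sub_cancel]
  have hlead : (derivative P).leadingCoeff = n + 1 := by
    rw [leadingCoeff, natDegree_derivative, hPdeg, Nat.add_sub_cancel, ← Nat.sub_zero n,
      hcoeff 0 n.zero_le, svec_zero]
    simp
  obtain ⟨g, hg⟩ :=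
    Multiset.exists_univ_val_map_eq ((derivative P).roots.map Neg.neg) (by simpa using hroots)
  refine ⟨g, fun j hj => ?_⟩
  have h := congrArg (coeff · (n - j)) hsplit.eq_prod_roots
  rw [coeff_C_mul, Multiset.prod_X_sub_C_coeff _ (by omega), hroots, Nat.sub_sub_self hj,
    hcoeff j hj, hlead] at h
  rw [svec_eq_esymm, hg, Multiset.esymm_neg, h]

section svecMean

variable {n : ℕ}

lemma svecMean_eq_zero_of_lt {k : ℕ} (h : n < k) (f : Fin n → ℝ) : svecMean n k f = 0 := by
  rw [svecMean, svec_eq_zero_of_lt h, zero_div]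

lemma exists_svecMean_eq_svecMean_succ (f : Fin (n + 1) → ℝ) :
    ∃ g : Fin n → ℝ, ∀ j ≤ n, svecMean n j g = svecMean (n + 1) j f := by
  obtain ⟨g, hg⟩ := exists_succ_mul_svec_eq n f
  refine ⟨g, fun j hj => ?_⟩
  have hchoose : (n.choose j : ℝ) * (n + 1) = ((n + 1).choose j : ℕ) * (n + 1 - j : ℕ) := by
    exact_mod_cast Nat.choose_mul_succ_eq n j
  have hpos : (0 : ℝ) < (n + 1 - j : ℕ) := by
    exact_mod_cast Nat.sub_pos_of_lt (Nat.lt_succ_of_le hj)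
  have hchoose_pos : (0 : ℝ) < n.choose j := by exact_mod_cast Nat.choose_pos hj
  have hchoose_succ_pos : (0 : ℝ) < (n + 1).choose j := by exact_mod_cast Nat.choose_pos (by omega)
  rw [svecMean, svecMean, div_eq_div_iff hchoose_pos.ne' hchoose_succ_pos.ne']
  apply mul_right_cancel₀ hpos.ne'
  linear_combination (n.choose j : ℝ) * hg j hj - Svec n j g * hchoose

lemma svecMean_inv_mul_prod {k : ℕ} (hk : k ≤ n) {f : Fin n → ℝ} (hf : ∀ i, f i ≠ 0) :
    svecMean n k f⁻¹ * ∏ i, f i = svecMean n (n - k) f := by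
  rw [svecMean, svecMean, Nat.choose_symm hk, div_mul_eq_mul_div, svec_inv_mul_prod hk hf]

lemma svecMean_zero_mul_svecMean_two_le_sq (f : Fin n → ℝ) :
    svecMean n 0 f * svecMean n 2 f ≤ svecMean n 1 f ^ 2 := by
  rcases lt_or_ge n 2 with hn | hn
  · rw [svecMean_eq_zero_of_lt hn, mul_zero]
    positivity
  have cauchy_schwarz : (∑ i, f i) ^ 2 ≤ n * ∑ i, f i ^ 2 := by
    simpa using sq_sum_le_card_mul_sum_sq (s := univ) (f := f)
  have h2 := two_mul_svec_two f
  have hn' : (2 : ℝ) ≤ n := by exact_mod_cast hn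
  simp only [svecMean, svec_zero, svec_one, Nat.choose_zero_right, Nat.choose_one_right,
    Nat.cast_choose_two]
  rw [Nat.cast_one, div_one, one_mul, div_pow, div_le_div_iff₀ (by nlinarith) (by positivity)]
  nlinarith [mul_le_mul_of_nonneg_left cauchy_schwarz (by positivity : (0 : ℝ) ≤ n)]

lemma svecMean_mul_svecMean_self_le_sq (j : ℕ) (f : Fin (j + 2) → ℝ) :
    svecMean (j + 2) j f * svecMean (j + 2) (j + 2) f ≤ svecMean (j + 2) (j + 1) f ^ 2 := by
  by_cases hzero : ∃ i, f i = 0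
  · obtain ⟨i, hi⟩ := hzero
    have htop : svecMean (j + 2) (j + 2) f = 0 := by
      rw [svecMean, svec_self, prod_eq_zero (mem_univ i) hi, zero_div]
    rw [htop, mul_zero]
    positivity
  · have hf : ∀ i, f i ≠ 0 := fun i hi => hzero ⟨i, hi⟩
    have h0 := svecMean_inv_mul_prod (k := 0) (by omega) hf
    have h1 := svecMean_inv_mul_prod (k := 1) (by omega) hf
    have h2 := svecMean_inv_mul_prod (k := 2) (by omega) hf
    rw [Nat.sub_zero] at h0
    rw [show j + 2 - 1 = j + 1 by omega] at h1
    rw [Nat.add_sub_cancel] at h2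
    rw [← h0, ← h1, ← h2]
    nlinarith [mul_le_mul_of_nonneg_right (svecMean_zero_mul_svecMean_two_le_sq f⁻¹)
      (sq_nonneg (∏ i, f i))]

/-- **Newton's inequalities**. -/
theorem svecMean_mul_svecMean_add_two_le_sq (j : ℕ) (f : Fin n → ℝ) :
    svecMean n j f * svecMean n (j + 2) f ≤ svecMean n (j + 1) f ^ 2 := by
  rcases lt_or_ge n (j + 2) with hn | hn
  · rw [svecMean_eq_zero_of_lt hn, mul_zero]
    positivity
  induction n, hn using Nat.le_induction with
  | base => exact svecMean_mul_svecMean_self_le_sq j f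
  | succ n hn ih =>
    obtain ⟨g, hg⟩ := exists_svecMean_eq_svecMean_succ f
    rw [← hg j (by omega), ← hg (j + 1) (by omega), ← hg (j + 2) hn]
    exact ih g

lemma svecMean_pos {k i : ℕ} {lam : Fin n → ℝ} (hlam : lam ∈ GardingCone n k) (hkn : k ≤ n)
    (hik : i ≤ k) : 0 < svecMean n i lam := by
  refine div_pos ?_ (by exact_mod_cast Nat.choose_pos (hik.trans hkn))
  rcases Nat.eq_zero_or_pos i with rfl | hi
  · rw [svec_zero]
    exact one_pos
  · exact hlam i hi hik

end svecMean

section MidpointConcave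

variable {L : ℕ → ℝ} {K : ℕ} (hL : ∀ i, i + 2 ≤ K → L i + L (i + 2) ≤ 2 * L (i + 1))
include hL

lemma three_point_of_midpoint_concave {a m b : ℕ} (ham : a ≤ m) (hmb : m ≤ b) (hbK : b ≤ K) :
    ((m : ℝ) - a) * (L b - L m) ≤ ((b : ℝ) - m) * (L m - L a) := by
  rcases hmb.eq_or_lt with rfl | hmb_lt
  · simp
  have hq : AntitoneOn (fun i => L (i + 1) - L i) (Set.Iio K) :=
    antitoneOn_of_add_one_le Set.ordConnected_Iio fun i _ _ hi => by
      have := hL i (by simp only [Set.mem_Iio] at hi; omega)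
      linarith
  have hm : m ∈ Set.Iio K := hmb_lt.trans_le hbK
  have upper : L b - L m ≤ ((b : ℝ) - m) * (L (m + 1) - L m) := by
    rw [← sum_Ico_sub L hmb, ← Nat.cast_sub hmb, ← Nat.card_Ico, ← nsmul_eq_mul, ← sum_const]
    exact sum_le_sum fun i hi =>
      hq hm (by simp only [mem_Ico] at hi; simp only [Set.mem_Iio]; omega) (mem_Ico.1 hi).1
  have lower : ((m : ℝ) - a) * (L (m + 1) - L m) ≤ L m - L a := by
    rw [← sum_Ico_sub L ham, ← Nat.cast_sub ham, ← Nat.card_Ico, ← nsmul_eq_mul, ← sum_const]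
    exact sum_le_sum fun i hi =>
      hq (by simp only [mem_Ico] at hi; simp only [Set.mem_Iio]; omega) hm (mem_Ico.1 hi).2.le
  have ham' : (0 : ℝ) ≤ m - a := sub_nonneg.2 (by exact_mod_cast ham)
  have hmb' : (0 : ℝ) ≤ b - m := sub_nonneg.2 (by exact_mod_cast hmb)
  calc ((m : ℝ) - a) * (L b - L m) ≤ (m - a) * ((b - m) * (L (m + 1) - L m)) :=
        mul_le_mul_of_nonneg_left upper ham'
    _ = (b - m) * ((m - a) * (L (m + 1) - L m)) := by ring
    _ ≤ (b - m) * (L m - L a) := mul_le_mul_of_nonneg_left lower hmb'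

lemma slope_le_slope_of_midpoint_concave {s l r : ℕ} (hsl : s ≤ l) (hlK : l < K) (hsr : s < r)
    (hrK : r ≤ K) : ((r : ℝ) - s) * (L K - L l) ≤ ((K : ℝ) - l) * (L r - L s) := by
  have hslK := three_point_of_midpoint_concave hL hsl hlK.le le_rfl
  have hsrK := three_point_of_midpoint_concave hL hsr.le hrK le_rfl
  have hsl' : (s : ℝ) ≤ l := by exact_mod_cast hsl
  have hlK' : (l : ℝ) < K := by exact_mod_cast hlK
  have hsr' : (s : ℝ) < r := by exact_mod_cast hsr
  refine le_of_mul_le_mul_left ?_ (sub_pos.2 (hsl'.trans_lt hlK'))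
  nlinarith [mul_le_mul_of_nonneg_left hslK (sub_nonneg.2 hsr'.le),
    mul_le_mul_of_nonneg_left hsrK (sub_nonneg.2 hlK'.le)]

end MidpointConcave

lemma Real.rpow_one_div_le_rpow_one_div_iff {x y a b : ℝ} (hx : 0 < x) (hy : 0 < y) (ha : 0 < a)
    (hb : 0 < b) : x ^ (1 / a) ≤ y ^ (1 / b) ↔ b * Real.log x ≤ a * Real.log y := by
  rw [Real.rpow_def_of_pos hx, Real.rpow_def_of_pos hy, Real.exp_le_exp, mul_one_div,
    mul_one_div, div_le_div_iff₀ ha hb, mul_comm, mul_comm a]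

theorem generalized_maclaurin_general
    (n k l r s : ℕ) (hlk : l < k) (hsr : s < r)
    (hrk : r ≤ k) (hsl : s ≤ l) (hkn : k ≤ n)
    (lam : Fin n → ℝ) (hlam : lam ∈ GardingCone n k) :
    ((Svec n k lam / (n.choose k : ℝ)) / (Svec n l lam / (n.choose l : ℝ)))
        ^ ((1 : ℝ) / ((k : ℝ) - l))
      ≤ ((Svec n r lam / (n.choose r : ℝ)) / (Svec n s lam / (n.choose s : ℝ)))
        ^ ((1 : ℝ) / ((r : ℝ) - s)) := by
  have hpos : ∀ i ≤ k, 0 < svecMean n i lam := fun i hi => svecMean_pos hlam hkn hi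
  have log_concave : ∀ i, i + 2 ≤ k → Real.log (svecMean n i lam) +
      Real.log (svecMean n (i + 2) lam) ≤ 2 * Real.log (svecMean n (i + 1) lam) := by
    intro i hi
    have hmid := hpos (i + 1) (by omega)
    rw [← Real.log_mul (hpos i (by omega)).ne' (hpos (i + 2) hi).ne', two_mul,
      ← Real.log_mul hmid.ne' hmid.ne', ← sq]
    exact Real.log_le_log (mul_pos (hpos i (by omega)) (hpos (i + 2) hi))
      (svecMean_mul_svecMean_add_two_le_sq i lam)
  change (svecMean n k lam / svecMean n l lam) ^ _ ≤ (svecMean n r lam / svecMean n s lam) ^ _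
  rw [Real.rpow_one_div_le_rpow_one_div_iff (div_pos (hpos k le_rfl) (hpos l hlk.le))
      (div_pos (hpos r hrk) (hpos s (hsl.trans hlk.le))) (by simpa using hlk) (by simpa using hsr),
    Real.log_div (hpos k le_rfl).ne' (hpos l hlk.le).ne',
    Real.log_div (hpos r hrk).ne' (hpos s (hsl.trans hlk.le)).ne']
  exact slope_le_slope_of_midpoint_concave log_concave hsl hlk hsr hrk

/-- Generalized Maclaurin inequality: for `λ ∈ Γ_k` and `k > l ≥ 0`, `r > s ≥ 0`,
`k ≥ r`, `l ≥ s`, `k ≤ n`,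
`((S_k/C_n^k)/(S_l/C_n^l))^{1/(k−l)} ≤ ((S_r/C_n^r)/(S_s/C_n^s))^{1/(r−s)}`. -/
theorem generalized_maclaurin
    (n k l r s : ℕ) (hn : 2 ≤ n) (hlk : l < k) (hsr : s < r)
    (hrk : r ≤ k) (hsl : s ≤ l) (hkn : k ≤ n)
    (lam : Fin n → ℝ) (hlam : lam ∈ GardingCone n k) :
    ((Svec n k lam / (n.choose k : ℝ)) / (Svec n l lam / (n.choose l : ℝ)))
        ^ ((1 : ℝ) / ((k : ℝ) - l))
      ≤ ((Svec n r lam / (n.choose r : ℝ)) / (Svec n s lam / (n.choose s : ℝ)))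
        ^ ((1 : ℝ) / ((r : ℝ) - s)) :=
  generalized_maclaurin_general n k l r s hlk hsr hrk hsl hkn lam hlam
end
end

section
/- Let n ≥ 1 and let k be an integer with 1 ≤ k ≤ n. For every n×n real matrix A = (a_{ij}) and all indices 1 ≤ i, j ≤ n, one has S_k^{ij}(A) = S_{k−1}(A) δ_{ij} − Σ_{l=1}^{n} S_{k−1}^{il}(A) a_{jl}, where δ_{ij} is the Kronecker delta. -/
open scoped BigOperators

noncomputable section

/-- Sum of the k×k principal minors of A (= k-th elementary symmetric function of the
eigenvalues of A); by definition `Smat n 0 A = 1`. -/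
def Smat (n k : ℕ) (A : Matrix (Fin n) (Fin n) ℝ) : ℝ :=
  ∑ s ∈ Finset.powersetCard k (Finset.univ : Finset (Fin n)),
    (A.submatrix (fun i : {a // a ∈ s} => (i : Fin n)) (fun j : {a // a ∈ s} => (j : Fin n))).det

/-- `S_k^{ij}(A) = ∂ S_k(A) / ∂ a_{ij}`, the partial derivative of the polynomial map
`A ↦ S_k(A)` with respect to the `(i,j)` entry.  Note `Sij n 0 A i j = 0`, matching the
convention `S_0^{il}(A) := 0`. -/
def Sij (n k : ℕ) (A : Matrix (Fin n) (Fin n) ℝ) (i j : Fin n) : ℝ :=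
  deriv (fun t : ℝ => Smat n k (A + t • Matrix.single i j (1:ℝ))) 0


/-! The generating polynomial of the `S_k(A)` is `det (1 + t A) = ∑ₖ S_k(A) tᵏ`. Perturbing the
entry `a_{ij}` changes only row `i` of `1 + t A`, so by multilinearity of the determinant
`∂/∂a_{ij} det (1 + t A) = t · adj (1 + t A)_{ji}`, i.e. `S_k^{ij}(A)` is the `tᵏ`-coefficient of
`t · adj (1 + t A)_{ji}`. The recursion is the `tᵏ`-coefficient of `t` times the `(j, i)` entry of
`(1 + t A) · adj (1 + t A) = det (1 + t A) · 1`. -/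

open Polynomial Matrix

section

variable {ι R : Type*} [DecidableEq ι] [CommRing R]

def Matrix.oneAddXSmul (M : Matrix ι ι R) : Matrix ι ι R[X] := 1 + (X : R[X]) • M.map C

theorem Matrix.oneAddXSmul_apply (M : Matrix ι ι R) (a b : ι) :
    oneAddXSmul M a b = (if a = b then 1 else 0) + C (M a b) * X := by
  rw [oneAddXSmul, add_apply, smul_apply, map_apply, one_apply, smul_eq_mul, mul_comm]

theorem Matrix.oneAddXSmul_add_smul_single (M : Matrix ι ι R) (i j : ι) (t : R) :
    oneAddXSmul (M + t • single i j 1) = oneAddXSmul M + (C t * X) • single i j 1 := by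
  ext a b : 2
  by_cases h : i = a ∧ j = b
  · obtain ⟨rfl, rfl⟩ := h
    simp [oneAddXSmul_apply, add_mul, add_assoc]
  · simp [oneAddXSmul_apply, h]

variable [Fintype ι]

theorem Matrix.det_add_smul_single (M : Matrix ι ι R) (i j : ι) (c : R) :
    (M + c • single i j 1).det = M.det + c * adjugate M j i := by
  have hupdate : M + c • single i j 1 = M.updateRow i (M i + c • Pi.single j 1) := by
    ext a b
    by_cases ha : a = i
    · subst ha; simp [Pi.single_apply, single_apply, eq_comm]
    · simp [ha, Ne.symm ha]
  rw [hupdate, det_updateRow_add, det_updateRow_smul, updateRow_eq_self, adjugate_apply]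

theorem Matrix.X_mul_adjugate_oneAddXSmul_coeff_recursion (M : Matrix ι ι R) (i j : ι) (k : ℕ) :
    (X * adjugate (oneAddXSmul M) j i).coeff (k + 1)
      + ∑ l, (X * adjugate (oneAddXSmul M) l i).coeff k * M j l
      = (oneAddXSmul M).det.coeff k * if i = j then 1 else 0 := by
  have hentry : (oneAddXSmul M).adjugate j i + ∑ l, C (M j l) * (X * (oneAddXSmul M).adjugate l i)
      = if i = j then (oneAddXSmul M).det else 0 := by
    have h := congr_fun (congr_fun (mul_adjugate (oneAddXSmul M)) j) i
    simp only [mul_apply, oneAddXSmul_apply, add_mul, Finset.sum_add_distrib, ite_mul, one_mul,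
      zero_mul, Finset.sum_ite_eq, Finset.mem_univ, if_true, mul_assoc, smul_apply, one_apply,
      smul_eq_mul] at h
    simpa [eq_comm] using h
  have hcoeff := congrArg (coeff · k) hentry
  rw [coeff_X_mul]
  by_cases hij : i = j <;> simpa [hij, finsetSum_coeff, coeff_C_mul, mul_comm] using hcoeff

end

theorem Smat_eq_coeff_det_oneAddXSmul (n k : ℕ) (A : Matrix (Fin n) (Fin n) ℝ) :
    Smat n k A = (oneAddXSmul A).det.coeff k :=
  (coeff_det_one_add_X_smul_eq_sum_minors A k).symm

theorem Smat_add_smul_single (n k : ℕ) (A : Matrix (Fin n) (Fin n) ℝ) (i j : Fin n) (t : ℝ) :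
    Smat n k (A + t • single i j 1)
      = Smat n k A + t * (X * adjugate (oneAddXSmul A) j i).coeff k := by
  rw [Smat_eq_coeff_det_oneAddXSmul, Smat_eq_coeff_det_oneAddXSmul, oneAddXSmul_add_smul_single,
    det_add_smul_single, coeff_add, mul_assoc, coeff_C_mul]

theorem Sij_eq_coeff_X_mul_adjugate (n k : ℕ) (A : Matrix (Fin n) (Fin n) ℝ) (i j : Fin n) :
    Sij n k A i j = (X * adjugate (oneAddXSmul A) j i).coeff k := by
  simp only [Sij, Smat_add_smul_single]
  exact (((hasDerivAt_id (0 : ℝ)).mul_const _).const_add (Smat n k A)).deriv.trans (one_mul _)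

theorem Sij_recursion_general
    (n k : ℕ) (hk1 : 1 ≤ k)
    (A : Matrix (Fin n) (Fin n) ℝ) (i j : Fin n) :
    Sij n k A i j
      = Smat n (k - 1) A * (if i = j then (1 : ℝ) else 0)
        - ∑ l : Fin n, Sij n (k - 1) A i l * A j l := by
  obtain ⟨m, rfl⟩ := Nat.exists_eq_add_of_le' hk1
  simp only [Nat.add_sub_cancel, Sij_eq_coeff_X_mul_adjugate, Smat_eq_coeff_det_oneAddXSmul]
  rw [eq_sub_iff_add_eq]
  exact X_mul_adjugate_oneAddXSmul_coeff_recursion A i j m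

/-- `S_k^{ij}(A) = S_{k−1}(A) δ_{ij} − Σ_l S_{k−1}^{il}(A) a_{jl}`. -/
theorem Sij_recursion
    (n k : ℕ) (hn : 1 ≤ n) (hk1 : 1 ≤ k) (hkn : k ≤ n)
    (A : Matrix (Fin n) (Fin n) ℝ) (i j : Fin n) :
    Sij n k A i j
      = Smat n (k - 1) A * (if i = j then (1 : ℝ) else 0)
        - ∑ l : Fin n, Sij n (k - 1) A i l * A j l :=
  Sij_recursion_general n k hk1 A i j
end
end

section
/- Let n ≥ 1 and let k be an integer with 1 ≤ k ≤ n. For every n×n real matrix A = (a_{ij}) and all indices 1 ≤ i, j ≤ n, one has Σ_{l=1}^{n} S_k^{il}(A) a_{jl} = Σ_{l=1}^{n} S_k^{lj}(A) a_{li}. -/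
open scoped BigOperators

noncomputable section

/-!
`S_k` is the `k`-th coefficient of `t ↦ det (1 + t A)`, so Sylvester's identity
`det (1 + X Y) = det (1 + Y X)` gives `S_k (X Y) = S_k (Y X)`. For `E = E_{ij}` this turns
`S_k ((1 + t E) A) = S_k (A (1 + t E))` into `dS_k(A)[E A] = dS_k(A)[A E]`, and expanding both
directional derivatives in the partial derivatives `S_k^{pq}` yields the two sides.
-/

open Matrix Polynomial

-- Any norm would do: one is needed only to speak of Fréchet derivatives.
attribute [local instance] Matrix.normedAddCommGroup Matrix.normedSpace

section

variable {m p : Type*} [Fintype m] [Fintype p] [DecidableEq m] [DecidableEq p]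

theorem Matrix.lineDeriv_eq_sum_mul_lineDeriv_single {f : Matrix m p ℝ → ℝ} {A : Matrix m p ℝ}
    (hf : DifferentiableAt ℝ f A) (H : Matrix m p ℝ) :
    lineDeriv ℝ f A H = ∑ a, ∑ b, H a b * lineDeriv ℝ f A (single a b 1) := by
  have single_eq (a : m) (b : p) : single a b (H a b) = H a b • single a b (1 : ℝ) := by
    rw [smul_single, smul_eq_mul, mul_one]
  simp only [hf.lineDeriv_eq_fderiv]
  conv_lhs => rw [matrix_eq_sum_single H]
  simp only [map_sum, single_eq, map_smul, smul_eq_mul]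

theorem Matrix.sum_lineDeriv_single_mul_eq_of_mul_comm {f : Matrix m m ℝ → ℝ}
    {A : Matrix m m ℝ} (hf : DifferentiableAt ℝ f A) (hcomm : ∀ X Y, f (X * Y) = f (Y * X))
    (i j : m) :
    ∑ l, lineDeriv ℝ f A (single i l 1) * A j l =
      ∑ l, lineDeriv ℝ f A (single l j 1) * A l i := by
  set E : Matrix m m ℝ := single i j 1
  have lineDeriv_EA_eq_AE : lineDeriv ℝ f A (E * A) = lineDeriv ℝ f A (A * E) := by
    refine congrArg (deriv · 0) (funext fun t => ?_)
    calc f (A + t • (E * A)) = f ((1 + t • E) * A) := by rw [add_mul, one_mul, Matrix.smul_mul]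
      _ = f (A * (1 + t • E)) := hcomm _ _
      _ = f (A + t • (A * E)) := by rw [mul_add, mul_one, Matrix.mul_smul]
  rw [lineDeriv_eq_sum_mul_lineDeriv_single hf, lineDeriv_eq_sum_mul_lineDeriv_single hf]
    at lineDeriv_EA_eq_AE
  calc ∑ l, lineDeriv ℝ f A (single i l 1) * A j l
      = ∑ a, ∑ b, (E * A) a b * lineDeriv ℝ f A (single a b 1) := by
        conv_rhs => rw [Fintype.sum_eq_single i fun a ha => by simp [E, ha]]
        simp [E, mul_comm]
    _ = ∑ a, ∑ b, (A * E) a b * lineDeriv ℝ f A (single a b 1) := lineDeriv_EA_eq_AE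
    _ = ∑ l, lineDeriv ℝ f A (single l j 1) * A l i := by
        refine Fintype.sum_congr _ _ fun a => ?_
        rw [Fintype.sum_eq_single j fun b hb => by simp [E, hb]]
        simp [E, mul_comm]

end

theorem Smat_eq_coeff_det_one_add_X_smul (n k : ℕ) (A : Matrix (Fin n) (Fin n) ℝ) :
    Smat n k A = (det (1 + (X : ℝ[X]) • A.map C)).coeff k :=
  (coeff_det_one_add_X_smul_eq_sum_minors A k).symm

theorem Smat_mul_comm (n k : ℕ) (A B : Matrix (Fin n) (Fin n) ℝ) :
    Smat n k (A * B) = Smat n k (B * A) := by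
  rw [Smat_eq_coeff_det_one_add_X_smul, Smat_eq_coeff_det_one_add_X_smul, Matrix.map_mul,
    Matrix.map_mul, ← Matrix.smul_mul, det_one_add_mul_comm, Matrix.mul_smul]

theorem differentiable_Smat (n k : ℕ) : Differentiable ℝ (Smat n k) := by
  unfold Smat
  simp only [det_apply, submatrix_apply]
  fun_prop

theorem Sij_eq_lineDeriv (n k : ℕ) (A : Matrix (Fin n) (Fin n) ℝ) (i j : Fin n) :
    Sij n k A i j = lineDeriv ℝ (Smat n k) A (single i j 1) :=
  rfl

theorem Sij_commutation_general
    (n k : ℕ)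
    (A : Matrix (Fin n) (Fin n) ℝ) (i j : Fin n) :
    ∑ l : Fin n, Sij n k A i l * A j l = ∑ l : Fin n, Sij n k A l j * A l i := by
  simp only [Sij_eq_lineDeriv]
  exact sum_lineDeriv_single_mul_eq_of_mul_comm (differentiable_Smat n k A) (Smat_mul_comm n k)
    i j

/-- `Σ_l S_k^{il}(A) a_{jl} = Σ_l S_k^{lj}(A) a_{li}`. -/
theorem Sij_commutation
    (n k : ℕ) (hn : 1 ≤ n) (hk1 : 1 ≤ k) (hkn : k ≤ n)
    (A : Matrix (Fin n) (Fin n) ℝ) (i j : Fin n) :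
    ∑ l : Fin n, Sij n k A i l * A j l = ∑ l : Fin n, Sij n k A l j * A l i :=
  Sij_commutation_general n k A i j
end
end

section
/- Let n ≥ 1, let k be an integer with 1 ≤ k ≤ n, let Ω ⊂ ℝⁿ be open, and let u ∈ C³(Ω). Then for each fixed index j, the vector field (S_k^{1j}(D²u), …, S_k^{nj}(D²u)) is divergence free on Ω: Σ_{i=1}^{n} ∂_i ( S_k^{ij}(D²u) ) = 0 at every point of Ω. -/
open scoped BigOperators

noncomputable section

/-- Partial derivative `∂f/∂x_i`. -/
def pd (n : ℕ) (f : EuclideanSpace ℝ (Fin n) → ℝ) (i : Fin n)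
    (x : EuclideanSpace ℝ (Fin n)) : ℝ :=
  fderiv ℝ f x (EuclideanSpace.single i 1)

/-- Hessian matrix of `u`: the `(i,j)` entry is `∂_j ∂_i u`. -/
def hess (n : ℕ) (u : EuclideanSpace ℝ (Fin n) → ℝ) (x : EuclideanSpace ℝ (Fin n)) :
    Matrix (Fin n) (Fin n) ℝ :=
  Matrix.of fun i j => pd n (pd n u i) j x

/-- `w = √(1 + |Du|²)`. -/
def wFn (n : ℕ) (u : EuclideanSpace ℝ (Fin n) → ℝ) (x : EuclideanSpace ℝ (Fin n)) : ℝ :=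
  Real.sqrt (1 + ∑ i, (pd n u i x) ^ 2)

/-- The curvature matrix `A(u)` of the graph of `u`, with entries `a_{ij} = ∂_j (u_i / w)`. -/
def curvMat (n : ℕ) (u : EuclideanSpace ℝ (Fin n) → ℝ) (x : EuclideanSpace ℝ (Fin n)) :
    Matrix (Fin n) (Fin n) ℝ :=
  Matrix.of fun i j => pd n (fun y => pd n u i y / wFn n u y) j x

/-!
`S_k(A)` is a sum of principal minors, and each minor is an alternating multilinear function of
the rows of `A`. Hence the second derivative `D²S_k(A)[E_pq, E_ij]` vanishes for `p = i` and
changes sign when the column indices `q` and `j` are exchanged; together with the symmetry of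
second derivatives this makes it antisymmetric in `(i, p)`. By the chain rule,
`∑ᵢ ∂ᵢ S_k^{ij}(D²u) = ∑_{i,p,q} u_{pqi} D²S_k(D²u)[E_pq, E_ij]`, which pairs a tensor symmetric
in `(p, i)` with one antisymmetric in `(i, p)`, so it vanishes.
-/

open Function

section SecondDerivative

variable {E F : Type*} [NormedAddCommGroup E] [NormedSpace ℝ E] [NormedAddCommGroup F]
  [NormedSpace ℝ F] {f : E → F} {x : E}

theorem fderiv_fderiv_apply (hf : DifferentiableAt ℝ (fderiv ℝ f) x) (v w : E) :
    fderiv ℝ (fderiv ℝ f) x w v = fderiv ℝ (fun y => fderiv ℝ f y v) x w := by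
  rw [fderiv_clm_apply hf (differentiableAt_const v)]
  simp

theorem fderiv_fderiv_apply_eq_lineDeriv (hf : DifferentiableAt ℝ (fderiv ℝ f) x) (v w : E) :
    fderiv ℝ (fderiv ℝ f) x w v = lineDeriv ℝ (fun y => fderiv ℝ f y v) x w := by
  rw [fderiv_fderiv_apply hf, (hf.clm_apply (differentiableAt_const v)).lineDeriv_eq_fderiv]

end SecondDerivative

namespace ContinuousMultilinearMap

variable {ι : Type*} [Fintype ι] {E : ι → Type*}
  [∀ i, NormedAddCommGroup (E i)] [∀ i, NormedSpace ℝ (E i)]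
  {F : Type*} [NormedAddCommGroup F] [NormedSpace ℝ F]
  (f : ContinuousMultilinearMap ℝ E F) (x : ∀ i, E i)

theorem differentiable_fderiv : Differentiable ℝ (fderiv ℝ f) :=
  (f.contDiff.fderiv_right (m := 1) le_top).differentiable one_ne_zero

variable [DecidableEq ι]

theorem fderiv_apply_single (i : ι) (v : E i) :
    fderiv ℝ f x (Pi.single i v) = f (update x i v) := by
  rw [(f.hasFDerivAt x).fderiv, linearDeriv_apply, Finset.sum_eq_single i]
  · simp
  · intro j _ hj
    rw [Pi.single_eq_of_ne hj]
    exact f.map_coord_zero j (update_self j 0 x)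
  · simp

theorem fderiv_fderiv_apply_single_single {i j : ι} (hij : i ≠ j) (v : E i) (w : E j) :
    fderiv ℝ (fderiv ℝ f) x (Pi.single j w) (Pi.single i v) = f (update (update x i v) j w) := by
  have hline : ∀ t : ℝ, update (x + t • Pi.single j w) i v = update x i v + t • Pi.single j w := by
    intro t
    ext l
    rcases eq_or_ne l i with rfl | hl
    · simp [hij]
    · simp [hl]
  rw [fderiv_fderiv_apply_eq_lineDeriv (f.differentiable_fderiv x), lineDeriv]
  simp_rw [fderiv_apply_single, hline]
  rw [← lineDeriv, ((f.contDiff.differentiable one_ne_zero) _).lineDeriv_eq_fderiv,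
    fderiv_apply_single]

theorem fderiv_fderiv_apply_single_single_self (i : ι) (v w : E i) :
    fderiv ℝ (fderiv ℝ f) x (Pi.single i w) (Pi.single i v) = 0 := by
  have hline : ∀ t : ℝ, update (x + t • Pi.single i w) i v = update x i v := by
    intro t
    ext l
    rcases eq_or_ne l i with rfl | hl
    · simp
    · simp [hl]
  rw [fderiv_fderiv_apply_eq_lineDeriv (f.differentiable_fderiv x), lineDeriv]
  simp_rw [fderiv_apply_single, hline]
  exact deriv_const _ _

end ContinuousMultilinearMap

namespace ContinuousAlternatingMap

variable {ι : Type*} [DecidableEq ι] {E : Type*} [NormedAddCommGroup E] [NormedSpace ℝ E]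
  {F : Type*} [NormedAddCommGroup F] [NormedSpace ℝ F]
  (g : E [⋀^ι]→L[ℝ] F) (x : ι → E)

theorem map_update_update_swap {i j : ι} (hij : i ≠ j) (v w : E) :
    g (update (update x i v) j w) = -g (update (update x i w) j v) := by
  have hswap := g.toAlternatingMap.map_swap (update (update x i w) j v) hij
  rw [coe_toAlternatingMap] at hswap
  rw [← hswap]
  congr 1
  ext l
  rcases eq_or_ne l i with rfl | hli
  · simp [hij, Equiv.swap_apply_left]
  rcases eq_or_ne l j with rfl | hlj
  · simp [hij, Equiv.swap_apply_right]
  · simp [hli, hlj, Equiv.swap_apply_of_ne_of_ne hli hlj]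

theorem fderiv_fderiv_apply_single_single_swap [Fintype ι] (i j : ι) (v w : E) :
    fderiv ℝ (fderiv ℝ g) x (Pi.single j w) (Pi.single i v)
      = -fderiv ℝ (fderiv ℝ g) x (Pi.single j v) (Pi.single i w) := by
  rw [← coe_toContinuousMultilinearMap]
  rcases eq_or_ne i j with rfl | hij
  · simp only [ContinuousMultilinearMap.fderiv_fderiv_apply_single_single_self, neg_zero]
  · rw [ContinuousMultilinearMap.fderiv_fderiv_apply_single_single _ _ hij,
      ContinuousMultilinearMap.fderiv_fderiv_apply_single_single _ _ hij,
      coe_toContinuousMultilinearMap, g.map_update_update_swap x hij]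

end ContinuousAlternatingMap

def Matrix.detRowContinuousAlternating (κ : Type*) [Fintype κ] [DecidableEq κ] :
    (κ → ℝ) [⋀^κ]→L[ℝ] ℝ :=
  { Matrix.detRowAlternating with cont := continuous_id.matrix_det }

section submatrixCLM

variable {ι : Type*}

def submatrixCLM {κ : Type*} (e : κ → ι) : (ι → ι → ℝ) →L[ℝ] (κ → κ → ℝ) where
  toFun A i j := A (e i) (e j)
  map_add' _ _ := rfl
  map_smul' _ _ := rfl
  cont := by fun_prop

theorem submatrixCLM_apply {κ : Type*} (e : κ → ι) (A : ι → ι → ℝ) :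
    submatrixCLM e A = fun i j => A (e i) (e j) :=
  rfl

variable [DecidableEq ι] {s : Finset ι} {a : ι}

theorem submatrixCLM_single_of_mem (ha : a ∈ s) (v : ι → ℝ) :
    submatrixCLM ((↑) : s → ι) (Pi.single a v) = Pi.single ⟨a, ha⟩ (v ∘ (↑)) := by
  ext i j
  rcases eq_or_ne i ⟨a, ha⟩ with rfl | hi
  · simp [submatrixCLM_apply]
  · simp [submatrixCLM_apply, hi, Subtype.val_injective.ne hi]

theorem submatrixCLM_single_of_notMem (ha : a ∉ s) (v : ι → ℝ) :
    submatrixCLM ((↑) : s → ι) (Pi.single a v) = 0 := by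
  ext i j
  have hia : (i : ι) ≠ a := fun h => ha (h ▸ i.2)
  simp [submatrixCLM_apply, hia]

end submatrixCLM

theorem fderiv_fderiv_sum_comp_clm {α E : Type*} [NormedAddCommGroup E] [NormedSpace ℝ E]
    {G : α → Type*} [∀ a, NormedAddCommGroup (G a)] [∀ a, NormedSpace ℝ (G a)]
    {F : Type*} [NormedAddCommGroup F] [NormedSpace ℝ F] (s : Finset α) {g : ∀ a, G a → F}
    (hg : ∀ a, ContDiff ℝ 2 (g a)) (L : ∀ a, E →L[ℝ] G a) (x X Y : E) :
    fderiv ℝ (fderiv ℝ fun y => ∑ a ∈ s, g a (L a y)) x Y X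
      = ∑ a ∈ s, fderiv ℝ (fderiv ℝ (g a)) (L a x) (L a Y) (L a X) := by
  have hcomp : ∀ a, ContDiff ℝ 2 (g a ∘ L a) := fun a => (hg a).comp (L a).contDiff
  calc fderiv ℝ (fderiv ℝ fun y => ∑ a ∈ s, g a (L a y)) x Y X
      = iteratedFDeriv ℝ 2 (fun y => ∑ a ∈ s, (g a ∘ L a) y) x ![Y, X] :=
        (iteratedFDeriv_two_apply _ x ![Y, X]).symm
    _ = ∑ a ∈ s, iteratedFDeriv ℝ 2 (g a) (L a x) (fun i => L a (![Y, X] i)) := by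
        rw [iteratedFDeriv_fun_sum_apply fun a _ => (hcomp a).contDiffAt, sum_apply]
        refine Finset.sum_congr rfl fun a _ => ?_
        rw [(L a).iteratedFDeriv_comp_right (hg a) x le_rfl,
          ContinuousMultilinearMap.compContinuousLinearMap_apply]
    _ = ∑ a ∈ s, fderiv ℝ (fderiv ℝ (g a)) (L a x) (L a Y) (L a X) := by
        simp only [iteratedFDeriv_two_apply, Matrix.cons_val_zero, Matrix.cons_val_one]

-- `Smat n k` is differentiated as a function on arrays `Fin n → Fin n → ℝ` (with the sup norm):
-- `Matrix` carries no global norm, and its topology is not reducibly that of a normed space.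
section Smat

variable (n k : ℕ)

theorem Smat_eq_sum_det_submatrixCLM (A : Fin n → Fin n → ℝ) :
    Smat n k A = ∑ s ∈ Finset.powersetCard k (Finset.univ : Finset (Fin n)),
      Matrix.detRowContinuousAlternating s (submatrixCLM ((↑) : s → Fin n) A) :=
  rfl

theorem contDiff_Smat {m : WithTop ℕ∞} : ContDiff ℝ m fun A : Fin n → Fin n → ℝ => Smat n k A := by
  simp_rw [Smat_eq_sum_det_submatrixCLM]
  exact ContDiff.sum fun s _ =>
    (Matrix.detRowContinuousAlternating s).toContinuousMultilinearMap.contDiff.comp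
      (submatrixCLM ((↑) : s → Fin n)).contDiff

theorem fderiv_fderiv_Smat_single_single_swap (A : Fin n → Fin n → ℝ) (a c : Fin n)
    (v w : Fin n → ℝ) :
    fderiv ℝ (fderiv ℝ fun B : Fin n → Fin n → ℝ => Smat n k B) A (Pi.single c w) (Pi.single a v)
      = -fderiv ℝ (fderiv ℝ fun B : Fin n → Fin n → ℝ => Smat n k B) A
          (Pi.single c v) (Pi.single a w) := by
  have hdet : ∀ s : Finset (Fin n), ContDiff ℝ 2 (Matrix.detRowContinuousAlternating s) :=
    fun s => (Matrix.detRowContinuousAlternating s).toContinuousMultilinearMap.contDiff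
  simp_rw [Smat_eq_sum_det_submatrixCLM]
  rw [fderiv_fderiv_sum_comp_clm _ hdet, fderiv_fderiv_sum_comp_clm _ hdet,
    ← Finset.sum_neg_distrib]
  refine Finset.sum_congr rfl fun s _ => ?_
  by_cases ha : a ∈ s
  · by_cases hc : c ∈ s
    · simp only [submatrixCLM_single_of_mem ha, submatrixCLM_single_of_mem hc]
      exact ContinuousAlternatingMap.fderiv_fderiv_apply_single_single_swap _ _ _ _ _ _
    · simp [submatrixCLM_single_of_notMem hc]
  · simp [submatrixCLM_single_of_notMem ha]

theorem fderiv_fderiv_Smat_single_single_antisymm (A : Fin n → Fin n → ℝ) (i p q j : Fin n) :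
    fderiv ℝ (fderiv ℝ fun B : Fin n → Fin n → ℝ => Smat n k B) A
        (Pi.single p (Pi.single q 1)) (Pi.single i (Pi.single j 1))
      = -fderiv ℝ (fderiv ℝ fun B : Fin n → Fin n → ℝ => Smat n k B) A
          (Pi.single i (Pi.single q 1)) (Pi.single p (Pi.single j 1)) := by
  rw [fderiv_fderiv_Smat_single_single_swap,
    (contDiff_Smat n k (m := 2)).contDiffAt.isSymmSndFDerivAt (by simp) (Pi.single p _)]

theorem Sij_eq_fderiv_Smat (A : Matrix (Fin n) (Fin n) ℝ) (i j : Fin n) :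
    Sij n k A i j
      = fderiv ℝ (fun B : Fin n → Fin n → ℝ => Smat n k B) A (Pi.single i (Pi.single j 1)) := by
  rw [← ((contDiff_Smat n k).differentiable one_ne_zero A).lineDeriv_eq_fderiv]
  unfold Sij lineDeriv
  rw [Matrix.single_eq_of_single_single]
  rfl

end Smat

theorem Finset.sum_sum_mul_eq_zero_of_symm_of_antisymm {α R : Type*} [Fintype α] [CommRing R]
    [NoZeroDivisors R] [CharZero R] {f g : α → α → R} (hf : ∀ i p, f i p = f p i)
    (hg : ∀ i p, g i p = -g p i) : ∑ i, ∑ p, f i p * g i p = 0 := by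
  refine self_eq_neg.mp ?_
  calc ∑ i, ∑ p, f i p * g i p = ∑ p, ∑ i, f p i * -g p i := by
        rw [Finset.sum_comm]; simp only [hf _ _, ← hg _ _]
    _ = -∑ i, ∑ p, f i p * g i p := by simp [Finset.sum_neg_distrib]

theorem eq_sum_sum_smul_single {ι κ R : Type*} [Fintype ι] [Fintype κ] [DecidableEq ι]
    [DecidableEq κ] [Semiring R] (M : ι → κ → R) :
    M = ∑ p, ∑ q, M p q • Pi.single p (Pi.single q (1 : R)) := by
  ext p q
  simp [Finset.sum_apply, Pi.single_apply, ite_apply]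

theorem fderiv_pi_pi_apply {E ι κ : Type*} [NormedAddCommGroup E] [NormedSpace ℝ E] [Fintype ι]
    [Fintype κ] {φ : E → ι → κ → ℝ} {x : E} (hφ : ∀ p q, DifferentiableAt ℝ (fun y => φ y p q) x)
    (v : E) : fderiv ℝ φ x v = fun p q => fderiv ℝ (fun y => φ y p q) x v := by
  have hrow : ∀ p, DifferentiableAt ℝ (fun y => φ y p) x := fun p =>
    differentiableAt_pi.mpr (hφ p)
  rw [fderiv_pi hrow]
  ext p q
  rw [ContinuousLinearMap.pi_apply, fderiv_pi (hφ p), ContinuousLinearMap.pi_apply]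

section PartialDerivatives

variable {n : ℕ}

theorem pd_congr_of_eventuallyEq {f g : EuclideanSpace ℝ (Fin n) → ℝ}
    {x : EuclideanSpace ℝ (Fin n)} (h : f =ᶠ[nhds x] g) (i : Fin n) : pd n f i x = pd n g i x := by
  rw [pd, pd, h.fderiv_eq]

theorem ContDiffOn.pd {f : EuclideanSpace ℝ (Fin n) → ℝ} {Ω : Set (EuclideanSpace ℝ (Fin n))}
    {m l : WithTop ℕ∞} (hf : ContDiffOn ℝ l f Ω) (hΩ : IsOpen Ω) (hml : m + 1 ≤ l) (i : Fin n) :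
    ContDiffOn ℝ m (pd n f i) Ω :=
  (hf.fderiv_of_isOpen hΩ hml).clm_apply contDiffOn_const

theorem pd_pd_comm {f : EuclideanSpace ℝ (Fin n) → ℝ} {x : EuclideanSpace ℝ (Fin n)}
    (hf : ContDiffAt ℝ 2 f x) (a b : Fin n) : pd n (pd n f a) b x = pd n (pd n f b) a x := by
  have hdf : DifferentiableAt ℝ (fderiv ℝ f) x :=
    (hf.fderiv_right (m := 1) le_rfl).differentiableAt one_ne_zero
  unfold pd
  rw [← fderiv_fderiv_apply hdf, ← fderiv_fderiv_apply hdf, hf.isSymmSndFDerivAt (by simp)]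

theorem pd_pd_pd_comm {u : EuclideanSpace ℝ (Fin n) → ℝ} {Ω : Set (EuclideanSpace ℝ (Fin n))}
    (hu : ContDiffOn ℝ 3 u Ω) (hΩ : IsOpen Ω) {x : EuclideanSpace ℝ (Fin n)} (hx : x ∈ Ω)
    (p q i : Fin n) : pd n (pd n (pd n u p) q) i x = pd n (pd n (pd n u i) q) p x := by
  have hu2 : ∀ y ∈ Ω, ContDiffAt ℝ 2 u y := fun y hy =>
    (hu.of_le (by norm_num)).contDiffAt (hΩ.mem_nhds hy)
  have hcomm : ∀ a b, pd n (pd n u a) b =ᶠ[nhds x] pd n (pd n u b) a := fun a b =>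
    Filter.eventually_of_mem (hΩ.mem_nhds hx) fun y hy => pd_pd_comm (hu2 y hy) a b
  calc pd n (pd n (pd n u p) q) i x = pd n (pd n (pd n u q) p) i x :=
        pd_congr_of_eventuallyEq (hcomm p q) i
    _ = pd n (pd n (pd n u q) i) p x :=
        pd_pd_comm ((hu.pd hΩ (by norm_num) q).contDiffAt (hΩ.mem_nhds hx)) p i
    _ = pd n (pd n (pd n u i) q) p x := pd_congr_of_eventuallyEq (hcomm q i) p

theorem pd_fderiv_comp {E : Type*} [NormedAddCommGroup E] [NormedSpace ℝ E] {G : E → ℝ}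
    {φ : EuclideanSpace ℝ (Fin n) → E} {x : EuclideanSpace ℝ (Fin n)}
    (hG : DifferentiableAt ℝ (fderiv ℝ G) (φ x)) (hφ : DifferentiableAt ℝ φ x) (X : E)
    (i : Fin n) :
    pd n (fun y => fderiv ℝ G (φ y) X) i x
      = fderiv ℝ (fderiv ℝ G) (φ x) (fderiv ℝ φ x (EuclideanSpace.single i 1)) X := by
  have hchain :=
    ((hG.hasFDerivAt.comp x hφ.hasFDerivAt).clm_apply (hasFDerivAt_const X x)).fderiv
  simpa [pd] using congrArg (· (EuclideanSpace.single i 1)) hchain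

theorem sum_pd_fderiv_hessian_eq_zero {F : (Fin n → Fin n → ℝ) → ℝ} (hF : ContDiff ℝ 2 F)
    (hanti : ∀ A (i p q j : Fin n),
      fderiv ℝ (fderiv ℝ F) A (Pi.single p (Pi.single q 1)) (Pi.single i (Pi.single j 1))
        = -fderiv ℝ (fderiv ℝ F) A (Pi.single i (Pi.single q 1)) (Pi.single p (Pi.single j 1)))
    {Ω : Set (EuclideanSpace ℝ (Fin n))} (hΩ : IsOpen Ω) {u : EuclideanSpace ℝ (Fin n) → ℝ}
    (hu : ContDiffOn ℝ 3 u Ω) (j : Fin n) {x : EuclideanSpace ℝ (Fin n)} (hx : x ∈ Ω) :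
    ∑ i, pd n (fun y => fderiv ℝ F (fun p q => pd n (pd n u p) q y)
      (Pi.single i (Pi.single j 1))) i x = 0 := by
  set H : EuclideanSpace ℝ (Fin n) → Fin n → Fin n → ℝ := fun y p q => pd n (pd n u p) q y
  set T := fun p q i => pd n (pd n (pd n u p) q) i x
  set Φ := fun i p q => fderiv ℝ (fderiv ℝ F) (H x)
    (Pi.single p (Pi.single q 1)) (Pi.single i (Pi.single j 1))
  have hentry : ∀ p q, DifferentiableAt ℝ (fun y => H y p q) x := fun p q =>
    (((hu.pd hΩ (by norm_num) p).pd hΩ le_rfl q).differentiableOn one_ne_zero).differentiableAt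
      (hΩ.mem_nhds hx)
  have hH : DifferentiableAt ℝ H x :=
    differentiableAt_pi.mpr fun p => differentiableAt_pi.mpr (hentry p)
  have hdF : DifferentiableAt ℝ (fderiv ℝ F) (H x) :=
    (hF.fderiv_right (m := 1) le_rfl).differentiable one_ne_zero _
  calc ∑ i, pd n (fun y => fderiv ℝ F (H y) (Pi.single i (Pi.single j 1))) i x
      = ∑ i, ∑ p, ∑ q, T p q i * Φ i p q := by
        refine Finset.sum_congr rfl fun i _ => ?_
        rw [pd_fderiv_comp hdF hH, fderiv_pi_pi_apply hentry, eq_sum_sum_smul_single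
          (fun p q => fderiv ℝ (fun y => H y p q) x (EuclideanSpace.single i 1))]
        simp only [map_sum, map_smul, sum_apply, smul_apply, smul_eq_mul]
        rfl
    _ = ∑ i, ∑ q, ∑ p, T p q i * Φ i p q := Finset.sum_congr rfl fun i _ => Finset.sum_comm
    _ = ∑ q, ∑ i, ∑ p, T p q i * Φ i p q := Finset.sum_comm
    _ = 0 := Finset.sum_eq_zero fun q _ =>
        Finset.sum_sum_mul_eq_zero_of_symm_of_antisymm (fun i p => pd_pd_pd_comm hu hΩ hx p q i)
          (fun i p => hanti _ i p q j)

end PartialDerivatives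

theorem Skij_hessian_divergence_free_general
    (n k : ℕ)
    (Ω : Set (EuclideanSpace ℝ (Fin n))) (hopen : IsOpen Ω)
    (u : EuclideanSpace ℝ (Fin n) → ℝ) (hu : ContDiffOn ℝ 3 u Ω) (j : Fin n) :
    ∀ x ∈ Ω, ∑ i : Fin n, pd n (fun y => Sij n k (hess n u y) i j) i x = 0 := by
  intro x hx
  simp_rw [Sij_eq_fderiv_Smat]
  exact sum_pd_fderiv_hessian_eq_zero (contDiff_Smat n k)
    (fderiv_fderiv_Smat_single_single_antisymm n k) hopen hu j hx

/-- For `u ∈ C³(Ω)` and each fixed `j`, the vector field `(S_k^{1j}(D²u), …, S_k^{nj}(D²u))`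
is divergence free on the open set `Ω`. -/
theorem Skij_hessian_divergence_free
    (n k : ℕ) (hn : 1 ≤ n) (hk1 : 1 ≤ k) (hkn : k ≤ n)
    (Ω : Set (EuclideanSpace ℝ (Fin n))) (hopen : IsOpen Ω)
    (u : EuclideanSpace ℝ (Fin n) → ℝ) (hu : ContDiffOn ℝ 3 u Ω) (j : Fin n) :
    ∀ x ∈ Ω, ∑ i : Fin n, pd n (fun y => Sij n k (hess n u y) i j) i x = 0 :=
  Skij_hessian_divergence_free_general n k Ω hopen u hu j
end
end
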